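/- arXiv:1103.4424 — 4 statements merged into one kernel-verified Lean document; each statement's English description precedes it below -/
import Mathlib

section
/- Let G be a countably infinite group and let C ≤ G be a finite cyclic subgroup of prime order whose normalizer N(C) = {g ∈ G : gCg⁻¹ = C} has infinite index in G. Let (K, κ) be a standard probability space with H(K, κ) > 0. Then the generalized Bernoulli shift G ↷ (K^{G/C}, κ^{G/C}) is essentially free: for every g ∈ G with g ≠ e, the set {x ∈ K^{G/C} : g·x = x} has κ^{G/C}-measure zero. -/
/-!
A point fixed by `g` takes equal values at `q` and `g⁻¹ • q`. If `g` moves infinitely many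
cosets, we can choose `n` moved cosets `q` so that all the `2n` cosets `q`, `g⁻¹ • q` are distinct;
cutting `K` along a set `B` with `0 < κ B < 1` then bounds the measure of the fixed set by
`(κ B ^ 2 + κ Bᶜ ^ 2) ^ n → 0`. Such a `B` exists because a zero-one measure on a standard
Borel space is a Dirac mass, whose entropy vanishes.

The coset `f C` is fixed by `g` iff `f⁻¹ g f ∈ C`. As `C` has prime order, every nontrivial
element generates it, so any two such `f` differ by an element of the normalizer `N(C)`: the fixed
cosets lie over one point of the infinite set `G ⧸ N(C)`, and all the others are moved.
-/

open MeasureTheory ENNReal Classical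

/-- The Shannon entropy of a probability space `(K, κ)`: if the measure is supported on a
countable set, it is `-∑ κ({k}) log κ({k})`; otherwise it is `+∞`. -/

noncomputable def shannonEntropy {K : Type*} [MeasurableSpace K] (κ : Measure K) : ℝ≥0∞ :=
  if ∃ S : Set K, S.Countable ∧ κ S = 1 then
    ∑' k : K, ENNReal.ofReal (-((κ {k}).toReal * Real.log (κ {k}).toReal))
  else ⊤

/-- `(K, κ)` is a two-atom space if `κ` is supported on two atoms. -/
def IsTwoAtomSpace {K : Type*} [MeasurableSpace K] (κ : Measure K) : Prop :=
  ∃ k₀ k₁ : K, κ {k₀, k₁} = 1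

/-- The Bernoulli shift action of `G` on `K^G`: `(g x)(f) = x(g⁻¹ f)`. -/
def bernoulliShift {G K : Type*} [Group G] (g : G) (x : G → K) : G → K :=
  fun f => x (g⁻¹ * f)

/-- `μ` is the product measure `κ^ι` on `K^ι`, characterized on cylinder sets. -/
def IsProductMeasure {ι K : Type*} [MeasurableSpace K] (κ : Measure K)
    (μ : Measure (ι → K)) : Prop :=
  IsProbabilityMeasure μ ∧
  ∀ (s : Finset ι) (A : ι → Set K), (∀ i ∈ s, MeasurableSet (A i)) →
    μ {x | ∀ i ∈ s, x i ∈ A i} = ∏ i ∈ s, κ (A i)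

/-- The Bernoulli shifts `G ↷ (K^G, κG)` and `G ↷ (L^G, lamG)` are isomorphic: there is a
measurable, measure-preserving, a.e. shift-equivariant map with a measurable a.e. inverse. -/
def IsBernoulliIso {G K L : Type*} [Group G] [MeasurableSpace K] [MeasurableSpace L]
    (κG : Measure (G → K)) (lamG : Measure (G → L)) : Prop :=
  ∃ φ : (G → K) → (G → L), Measurable φ ∧ Measure.map φ κG = lamG ∧
    (∀ g : G, ∀ᵐ x ∂κG, φ (bernoulliShift g x) = bernoulliShift g (φ x)) ∧
    ∃ ψ : (G → L) → (G → K), Measurable ψ ∧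
      (∀ᵐ x ∂κG, ψ (φ x) = x) ∧ (∀ᵐ y ∂lamG, φ (ψ y) = y)


theorem QuotientGroup.smul_mk_eq_mk_iff {G : Type*} [Group G] {C : Subgroup G} (g f : G) :
    g • (f : G ⧸ C) = f ↔ f⁻¹ * g⁻¹ * f ∈ C := by
  rw [MulAction.Quotient.smul_mk, QuotientGroup.eq, smul_eq_mul, mul_inv_rev]

namespace Subgroup

variable {G : Type*} [Group G] {C : Subgroup G}

theorem zpowers_eq_of_prime_card (hC : (Nat.card C).Prime) {a : G} (ha : a ∈ C) (ha1 : a ≠ 1) :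
    zpowers a = C := by
  have : Finite C := Nat.finite_of_card_ne_zero hC.ne_zero
  refine eq_of_le_of_card_ge (zpowers_le.2 ha) ?_
  rw [Nat.card_zpowers]
  obtain h | h := hC.eq_one_or_self_of_dvd _ (C.orderOf_dvd_natCard ha)
  · exact absurd (orderOf_eq_one_iff.1 h) ha1
  · exact h.ge

theorem mem_normalizer_of_conj_mem_of_prime_card (hC : (Nat.card C).Prime) {a h : G}
    (ha : a ∈ C) (ha1 : a ≠ 1) (hconj : h * a * h⁻¹ ∈ C) : h ∈ normalizer (C : Set G) := by
  have hconj1 : h * a * h⁻¹ ≠ 1 := by rwa [Ne, mul_inv_eq_one, mul_eq_left]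
  rw [mem_normalizer_iff_map_conj_eq]
  nth_rewrite 1 [← zpowers_eq_of_prime_card hC ha ha1]
  rw [MonoidHom.map_zpowers]
  exact zpowers_eq_of_prime_card hC hconj hconj1

theorem quotientMapOfLE_eq_of_smul_eq (hC : (Nat.card C).Prime) {g : G} (hg : g ≠ 1)
    {q₁ q₂ : G ⧸ C} (h₁ : g • q₁ = q₁) (h₂ : g • q₂ = q₂) :
    quotientMapOfLE (le_normalizer (H := C)) q₁ = quotientMapOfLE le_normalizer q₂ := by
  induction q₁ using QuotientGroup.induction_on with | H f₁ => ?_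
  induction q₂ using QuotientGroup.induction_on with | H f₂ => ?_
  rw [QuotientGroup.smul_mk_eq_mk_iff] at h₁ h₂
  rw [quotientMapOfLE_apply_mk, quotientMapOfLE_apply_mk, QuotientGroup.eq, ← inv_mem_iff]
  refine mem_normalizer_of_conj_mem_of_prime_card hC h₁ ?_ ?_
  · rwa [Ne, mul_eq_one_iff_eq_inv, mul_eq_left, inv_eq_one]
  · simpa [mul_assoc] using h₂

theorem infinite_setOf_smul_ne (hC : (Nat.card C).Prime)
    (hN : Infinite (G ⧸ normalizer (C : Set G))) {g : G} (hg : g ≠ 1) :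
    {q : G ⧸ C | g • q ≠ q}.Infinite := by
  set π := quotientMapOfLE (le_normalizer (H := C))
  obtain ⟨y, hy⟩ : ∃ y, ∀ q : G ⧸ C, g • q = q → π q = y := by
    by_cases hfix : ∃ q₀ : G ⧸ C, g • q₀ = q₀
    · obtain ⟨q₀, hq₀⟩ := hfix
      exact ⟨π q₀, fun q hq => quotientMapOfLE_eq_of_smul_eq hC hg hq hq₀⟩
    · push Not at hfix
      exact ⟨Classical.arbitrary _, fun q hq => (hfix q hq).elim⟩
  have hπ : Function.Surjective π := fun y =>
    QuotientGroup.induction_on y fun f => ⟨f, rfl⟩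
  refine Set.Infinite.mono (fun q (hq : π q ≠ y) hfix => hq (hy q hfix)) ?_
  exact (Set.finite_singleton y).infinite_compl.preimage (by simp [hπ.range_eq])

end Subgroup

section

variable {K : Type*} [MeasurableSpace K]

theorem shannonEntropy_dirac [MeasurableSingletonClass K] (k : K) :
    shannonEntropy (Measure.dirac k) = 0 := by
  rw [shannonEntropy, if_pos ⟨{k}, Set.countable_singleton k, by simp⟩]
  refine ENNReal.tsum_eq_zero.2 fun k' => ?_
  by_cases h : k = k' <;> simp [h]

theorem exists_measurableSet_measure_ne_zero_ne_one [StandardBorelSpace K] {κ : Measure K}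
    [IsProbabilityMeasure κ] (hκ : 0 < shannonEntropy κ) :
    ∃ B, MeasurableSet B ∧ κ B ≠ 0 ∧ κ B ≠ 1 := by
  by_contra! h
  have : IsZeroOneMeasure κ := ⟨fun s hs => or_iff_not_imp_left.2 (h s hs)⟩
  obtain ⟨k, rfl⟩ := IsZeroOneMeasure.exists_eq_dirac (μ := κ)
  exact hκ.ne' (shannonEntropy_dirac k)

theorem measure_sq_add_measure_compl_sq_lt_one {κ : Measure K} [IsProbabilityMeasure κ]
    {B : Set K} (hB : MeasurableSet B) (hB0 : κ B ≠ 0) (hB1 : κ B ≠ 1) :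
    κ B ^ 2 + κ Bᶜ ^ 2 < 1 := by
  have hlt : κ B ^ 2 < κ B := by
    simpa [sq] using ENNReal.mul_lt_mul_right hB0 (by finiteness) (prob_le_one.lt_of_ne hB1)
  have hle : κ Bᶜ ^ 2 ≤ κ Bᶜ := pow_le_of_le_one zero_le prob_le_one two_ne_zero
  calc κ B ^ 2 + κ Bᶜ ^ 2 < κ B + κ Bᶜ := ENNReal.add_lt_add_of_lt_of_le (by finiteness) hlt hle
    _ = 1 := by rw [measure_add_measure_compl hB, measure_univ]

end

theorem Finset.exists_card_eq_disjoint_image {ι : Type*} {T : ι → ι} (hT : T.Injective)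
    (hmoved : {i | T i ≠ i}.Infinite) (n : ℕ) :
    ∃ s : Finset ι, s.card = n ∧ Disjoint s (s.image T) := by
  induction n with
  | zero => exact ⟨∅, rfl, by simp⟩
  | succ n ih =>
    obtain ⟨s, rfl, hs⟩ := ih
    have hfinite : ((s ∪ s.image T : Finset ι) ∪ T ⁻¹' s : Set ι).Finite :=
      (Finset.finite_toSet _).union (s.finite_toSet.preimage hT.injOn)
    obtain ⟨i, hi, hi_new⟩ := (hmoved.sdiff hfinite).nonempty
    simp only [Set.mem_union, Finset.coe_union, Finset.coe_image, Set.mem_preimage, not_or] at hi_new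
    refine ⟨insert i s, Finset.card_insert_of_notMem ?_, ?_⟩
    · exact hi_new.1.1
    · rw [Finset.image_insert, Finset.disjoint_insert_left, Finset.disjoint_insert_right]
      refine ⟨?_, hi_new.2, hs⟩
      simpa [Ne.symm hi] using hi_new.1.2

namespace IsProductMeasure

variable {ι K : Type*} [MeasurableSpace K] {κ : Measure K} {μ : Measure (ι → K)}

theorem measure_setOf_forall_mem (hμ : IsProductMeasure κ μ) {J : Type*} [Fintype J]
    {e : J → ι} (he : e.Injective) {A : J → Set K} (hA : ∀ j, MeasurableSet (A j)) :
    μ {x | ∀ j, x (e j) ∈ A j} = ∏ j, κ (A j) := by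
  have key := hμ.2 (Finset.univ.image e) (Function.extend e A fun _ => Set.univ)
    (by simp [he.extend_apply, hA])
  rw [Finset.prod_image fun a _ b _ h => he h] at key
  simpa [he.extend_apply] using key

theorem measure_setOf_comp_eq_self_le (hμ : IsProductMeasure κ μ) {T : ι → ι}
    (hT : T.Injective) {s : Finset ι} (hs : Disjoint s (s.image T)) {B : Set K}
    (hB : MeasurableSet B) : μ {x | x ∘ T = x} ≤ (κ B ^ 2 + κ Bᶜ ^ 2) ^ s.card := by
  let P : Bool → Set K := fun b => if b then B else Bᶜ
  have hP : ∀ b, MeasurableSet (P b) := by simp [P, hB, hB.compl]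
  let e : Bool × s → ι := fun p => if p.1 then p.2 else T p.2
  have he : e.Injective := by
    have hne : ∀ i j : s, (i : ι) ≠ T j := fun i j h =>
      Finset.disjoint_left.1 hs i.2 (h ▸ Finset.mem_image_of_mem T j.2)
    rintro ⟨_ | _, i⟩ ⟨_ | _, j⟩ h
    · exact congrArg _ (Subtype.ext (hT h))
    · exact absurd h.symm (hne j i)
    · exact absurd h (hne i j)
    · exact congrArg _ (Subtype.ext h)
  have hcover : {x | x ∘ T = x} ⊆ ⋃ ε : s → Bool, {x | ∀ p, x (e p) ∈ P (ε p.2)} := by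
    intro x hx
    refine Set.mem_iUnion.2 ⟨fun i => decide (x i ∈ B), fun ⟨b, i⟩ => ?_⟩
    have hxi : x (e (b, i)) = x i := by
      cases b
      · exact congrFun hx i
      · rfl
    by_cases h : x i ∈ B <;> simp [P, hxi, h]
  calc μ {x | x ∘ T = x}
      ≤ ∑ ε : s → Bool, μ {x | ∀ p, x (e p) ∈ P (ε p.2)} :=
        (measure_mono hcover).trans (measure_iUnion_fintype_le _ _)
    _ = ∑ ε : s → Bool, ∏ i : s, κ (P (ε i)) ^ 2 := by
        refine Finset.sum_congr rfl fun ε _ => ?_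
        rw [hμ.measure_setOf_forall_mem he fun p => hP _, Fintype.prod_prod_type_right]
        simp [sq]
    _ = ∏ i : s, ∑ b, κ (P b) ^ 2 := (Fintype.prod_sum fun _ b => κ (P b) ^ 2).symm
    _ = (κ B ^ 2 + κ Bᶜ ^ 2) ^ s.card := by simp [P]

theorem measure_setOf_comp_eq_self_eq_zero [IsProbabilityMeasure κ] (hμ : IsProductMeasure κ μ)
    {T : ι → ι} (hT : T.Injective) (hmoved : {i | T i ≠ i}.Infinite) {B : Set K}
    (hB : MeasurableSet B) (hB0 : κ B ≠ 0) (hB1 : κ B ≠ 1) : μ {x | x ∘ T = x} = 0 := by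
  refine le_zero_iff.1 (ge_of_tendsto' (ENNReal.tendsto_pow_atTop_nhds_zero_of_lt_one
    (measure_sq_add_measure_compl_sq_lt_one hB hB0 hB1)) fun n => ?_)
  obtain ⟨s, rfl, hs⟩ := Finset.exists_card_eq_disjoint_image hT hmoved n
  exact hμ.measure_setOf_comp_eq_self_le hT hs hB

end IsProductMeasure

theorem generalized_bernoulli_shift_essentially_free_general
    (G : Type*) [Group G]
    (C : Subgroup G) (hprime : (Nat.card C).Prime)
    (hnorm : Infinite (G ⧸ Subgroup.normalizer (C : Set G)))
    (K : Type*) [MeasurableSpace K] [StandardBorelSpace K]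
    (κ : Measure K) [IsProbabilityMeasure κ] (hK : 0 < shannonEntropy κ)
    (μGC : Measure ((G ⧸ C) → K)) (hμGC : IsProductMeasure κ μGC)
    (g : G) (hg : g ≠ 1) :
    μGC {x : (G ⧸ C) → K | (fun q => x (g⁻¹ • q)) = x} = 0 := by
  obtain ⟨B, hB, hB0, hB1⟩ := exists_measurableSet_measure_ne_zero_ne_one hK
  exact hμGC.measure_setOf_comp_eq_self_eq_zero (MulAction.injective g⁻¹)
    (Subgroup.infinite_setOf_smul_ne hprime hnorm (inv_ne_one.2 hg)) hB hB0 hB1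

/-- **Lemma 5.1.** Let `G` be a countably infinite group and `C ≤ G` a finite cyclic subgroup
of prime order whose normalizer has infinite index in `G`. If `(K, κ)` is a standard
probability space with `H(K, κ) > 0`, then the generalized Bernoulli shift
`G ↷ (K^{G/C}, κ^{G/C})` is essentially free: every nonidentity `g ∈ G` fixes only a null set
of points. -/
theorem generalized_bernoulli_shift_essentially_free
    (G : Type*) [Group G] [Countable G] [Infinite G]
    (C : Subgroup G) (hcyc : IsCyclic C) (hprime : (Nat.card C).Prime)
    (hnorm : Infinite (G ⧸ Subgroup.normalizer (C : Set G)))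
    (K : Type*) [MeasurableSpace K] [StandardBorelSpace K]
    (κ : Measure K) [IsProbabilityMeasure κ] (hK : 0 < shannonEntropy κ)
    (μGC : Measure ((G ⧸ C) → K)) (hμGC : IsProductMeasure κ μGC)
    (g : G) (hg : g ≠ 1) :
    μGC {x : (G ⧸ C) → K | (fun q => x (g⁻¹ • q)) = x} = 0 :=
  generalized_bernoulli_shift_essentially_free_general G C hprime hnorm K κ hK μGC hμGC g hg
end

section
/- Let G be a group and let C ≤ G be a cyclic subgroup of prime order whose normalizer N(C) = {g ∈ G : gCg⁻¹ = C} has infinite index in G. Then for every g ∈ G with g ≠ e, the set I_g = {fC ∈ G/C : gfC ≠ fC} of left cosets of C not fixed by left translation by g is infinite. -/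
/-!
If `g` fixes the cosets `fC` and `f₀C`, then `f⁻¹ g f` and `f₀⁻¹ g f₀` are nontrivial elements
of `C`, hence both generate `C` since `|C|` is prime. Conjugation by `f⁻¹ f₀` carries the second
to the first, so it normalizes `C`: all cosets fixed by `g` lie over a single coset of `N(C)`.
As `G/C → G/N(C)` is onto an infinite set, the cosets not fixed by `g` cannot be finitely many.
-/

namespace Subgroup

variable {G : Type*} [Group G] {C : Subgroup G}

theorem zpowers_eq_of_prime_card_s7 (hp : (Nat.card C).Prime) {x : G} (hx : x ∈ C) (hx1 : x ≠ 1) :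
    zpowers x = C := by
  have hle : zpowers x ≤ C := zpowers_le.2 hx
  have : Finite C := Nat.finite_of_card_ne_zero hp.ne_zero
  refine eq_of_le_of_card_ge hle ?_
  rcases hp.eq_one_or_self_of_dvd _ (card_dvd_of_le hle) with h | h
  · exact absurd (zpowers_eq_bot.1 (card_eq_one.1 h)) hx1
  · exact h.ge

theorem mem_normalizer_of_zpowers_conj_eq {x a : G} (hx : zpowers x = C)
    (hax : zpowers (a * x * a⁻¹) = C) : a ∈ normalizer (C : Set G) := by
  rw [mem_normalizer_iff_map_conj_eq, ← hx, MonoidHom.map_zpowers]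
  exact hax.trans hx.symm

end Subgroup

namespace QuotientGroup

variable {G : Type*} [Group G]

theorem smul_mk_eq_self_iff (H : Subgroup G) (g f : G) :
    g • (f : G ⧸ H) = f ↔ f⁻¹ * g * f ∈ H := by
  rw [MulAction.Quotient.smul_mk, QuotientGroup.eq, smul_eq_mul, ← inv_mem_iff]
  simp only [mul_inv_rev, inv_inv, mul_assoc]

theorem mk_normalizer_eq_of_smul_mk_eq_self {C : Subgroup G} (hp : (Nat.card C).Prime)
    {g : G} (hg : g ≠ 1) {f f₀ : G} (hf : g • (f : G ⧸ C) = f) (hf₀ : g • (f₀ : G ⧸ C) = f₀) :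
    (f : G ⧸ Subgroup.normalizer (C : Set G)) = f₀ := by
  rw [smul_mk_eq_self_iff] at hf hf₀
  have generates (u : G) (hu : u⁻¹ * g * u ∈ C) : Subgroup.zpowers (u⁻¹ * g * u) = C := by
    have hu1 := (conj_eq_one_iff (a := u⁻¹)).not.2 hg
    rw [inv_inv] at hu1
    exact Subgroup.zpowers_eq_of_prime_card_s7 hp hu hu1
  rw [QuotientGroup.eq]
  refine Subgroup.mem_normalizer_of_zpowers_conj_eq (generates f₀ hf₀) ?_
  convert generates f hf using 2
  group

theorem subsingleton_image_fixedPoints_of_prime_card {C : Subgroup G} (hp : (Nat.card C).Prime)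
    {g : G} (hg : g ≠ 1) :
    (Subgroup.quotientMapOfLE (Subgroup.le_normalizer (H := C)) ''
      {q : G ⧸ C | g • q = q}).Subsingleton := by
  rintro _ ⟨q, hq, rfl⟩ _ ⟨q₀, hq₀, rfl⟩
  induction q using QuotientGroup.induction_on
  induction q₀ using QuotientGroup.induction_on
  exact mk_normalizer_eq_of_smul_mk_eq_self hp hg hq hq₀

end QuotientGroup

theorem infinite_nonfixed_cosets_general
    (G : Type*) [Group G] (C : Subgroup G)
    (hprime : (Nat.card C).Prime)
    (hnorm : Infinite (G ⧸ Subgroup.normalizer (C : Set G)))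
    (g : G) (hg : g ≠ 1) :
    {q : G ⧸ C | g • q ≠ q}.Infinite := by
  intro hfin
  set π := Subgroup.quotientMapOfLE (Subgroup.le_normalizer (H := C))
  have hπ : Function.Surjective π := fun q ↦
    let ⟨f, hf⟩ := QuotientGroup.mk_surjective q; ⟨f, hf⟩
  have hcover : π '' {q | g • q = q} ∪ π '' {q | g • q ≠ q} = Set.univ := by
    simp only [← Set.image_union, ← Set.ofPred_or, em, Set.ofPred_true,
      Set.image_univ_of_surjective hπ]
  exact Set.infinite_univ (hcover.symm ▸
    ((QuotientGroup.subsingleton_image_fixedPoints_of_prime_card hprime hg).finite.union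
      (hfin.image π)))

/-- If `C ≤ G` is a cyclic subgroup of prime order whose normalizer has infinite index in `G`,
then for every `g ≠ e` the set of left cosets `fC ∈ G/C` with `g f C ≠ f C` is infinite. -/
theorem infinite_nonfixed_cosets
    (G : Type*) [Group G] (C : Subgroup G)
    (hcyc : IsCyclic C) (hprime : (Nat.card C).Prime)
    (hnorm : Infinite (G ⧸ Subgroup.normalizer (C : Set G)))
    (g : G) (hg : g ≠ 1) :
    {q : G ⧸ C | g • q ≠ q}.Infinite :=
  infinite_nonfixed_cosets_general G C hprime hnorm g hg
end

section
/- For any real numbers t, r with 0 < t < 1 and −t·log t − (1−t)·log(1−t) < r, there exists a standard probability space (L, λ) with an element l₁ ∈ L such that λ({l₁}) = t and H(L, λ) = r. -/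
/-- A standard probability space: a standard Borel space together with a probability
measure. -/
structure StdProbSpace where
  carrier : Type
  [mble : MeasurableSpace carrier]
  [borel : StandardBorelSpace carrier]
  μ : MeasureTheory.Measure carrier
  [prob : MeasureTheory.IsProbabilityMeasure μ]

attribute [instance] StdProbSpace.mble StdProbSpace.borel StdProbSpace.prob

open MeasureTheory ENNReal Classical

/-!
Put an atom of mass `t` next to `1 - t` times a finite distribution `q`. By the grouping
rule the entropy is `H(t, 1 - t) + (1 - t) H(q)`, so it suffices that every value
`s ≥ 0` is the entropy of some finite distribution. The mixtures `(1 - θ) δ₀ + θ · uniform`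
on `n + 1` points have entropy varying continuously from `0` to `log (n + 1)`, and
`log (n + 1) ≥ s` for `n ≥ exp s`, so the intermediate value theorem gives `q`.
-/

open Real

lemma shannonEntropy_of_countable {α : Type*} [Countable α] [MeasurableSpace α]
    (μ : Measure α) [IsProbabilityMeasure μ] :
    shannonEntropy μ = ∑' a, ENNReal.ofReal (negMulLog (μ {a}).toReal) := by
  rw [shannonEntropy, if_pos ⟨Set.univ, Set.countable_univ, measure_univ⟩]
  simp only [negMulLog, neg_mul]

lemma exists_probabilityMeasure_of_weights {α : Type*} [Fintype α] [MeasurableSpace α]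
    [MeasurableSingletonClass α] (w : α → ℝ) (hw0 : ∀ a, 0 ≤ w a) (hw1 : ∑ a, w a = 1) :
    ∃ μ : Measure α, IsProbabilityMeasure μ ∧ (∀ a, μ {a} = ENNReal.ofReal (w a)) ∧
      shannonEntropy μ = ENNReal.ofReal (∑ a, negMulLog (w a)) := by
  have hw_le_one (a : α) : w a ≤ 1 :=
    hw1 ▸ Finset.single_le_sum (fun b _ => hw0 b) (Finset.mem_univ a)
  let p : PMF α := PMF.ofFintype (fun a => ENNReal.ofReal (w a)) <| by
    rw [← ENNReal.ofReal_sum_of_nonneg fun a _ => hw0 a, hw1, ENNReal.ofReal_one]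
  have hp (a : α) : p.toMeasure {a} = ENNReal.ofReal (w a) :=
    p.toMeasure_apply_singleton a (measurableSet_singleton a)
  refine ⟨p.toMeasure, inferInstance, hp, ?_⟩
  rw [shannonEntropy_of_countable, tsum_fintype, ENNReal.ofReal_sum_of_nonneg
    fun a _ => negMulLog_nonneg (hw0 a) (hw_le_one a)]
  simp only [hp, ENNReal.toReal_ofReal (hw0 _)]

noncomputable def diracUniformMix (n : ℕ) (θ : ℝ) : Fin (n + 1) → ℝ :=
  Fin.cons (1 - θ + θ / (n + 1)) fun _ => θ / (n + 1)

section diracUniformMix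

variable {n : ℕ} {θ : ℝ}

lemma diracUniformMix_nonneg (hθ : θ ∈ Set.Icc (0 : ℝ) 1) (i : Fin (n + 1)) :
    0 ≤ diracUniformMix n θ i := by
  obtain ⟨hθ0, hθ1⟩ := hθ
  have : 0 ≤ θ / (n + 1) := by positivity
  cases i using Fin.cases <;> simp only [diracUniformMix, Fin.cons_zero, Fin.cons_succ] <;>
    linarith

lemma sum_diracUniformMix : ∑ i, diracUniformMix n θ i = 1 := by
  simp only [diracUniformMix, Fin.sum_univ_succ, Fin.cons_zero, Fin.cons_succ,
    Finset.sum_const, Finset.card_univ, Fintype.card_fin, nsmul_eq_mul]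
  field_simp
  ring

lemma continuous_sum_negMulLog_diracUniformMix :
    Continuous fun θ => ∑ i, negMulLog (diracUniformMix n θ i) := by
  refine continuous_finsetSum _ fun i _ => continuous_negMulLog.comp ?_
  cases i using Fin.cases <;> simp only [diracUniformMix, Fin.cons_zero, Fin.cons_succ] <;>
    fun_prop

lemma sum_negMulLog_diracUniformMix_zero : ∑ i, negMulLog (diracUniformMix n 0 i) = 0 := by
  simp [diracUniformMix, Fin.sum_univ_succ]

lemma sum_negMulLog_diracUniformMix_one :
    ∑ i, negMulLog (diracUniformMix n 1 i) = Real.log (n + 1) := by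
  have hN : (n + 1 : ℝ) ≠ 0 := by positivity
  simp only [diracUniformMix, Fin.sum_univ_succ, Fin.cons_zero, Fin.cons_succ, sub_self,
    zero_add, Finset.sum_const, Finset.card_univ, Fintype.card_fin, nsmul_eq_mul, negMulLog,
    one_div, Real.log_inv]
  field_simp
  ring

end diracUniformMix

lemma exists_weights_sum_negMulLog_eq {s : ℝ} (hs : 0 ≤ s) :
    ∃ (n : ℕ) (q : Fin n → ℝ), (∀ i, 0 ≤ q i) ∧ ∑ i, q i = 1 ∧ ∑ i, negMulLog (q i) = s := by
  set n := ⌈exp s⌉₊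
  have hs_le_log : s ≤ Real.log (n + 1) := by
    rw [le_log_iff_exp_le (by positivity)]
    linarith [Nat.le_ceil (exp s)]
  obtain ⟨θ, hθ, hθs⟩ := intermediate_value_Icc zero_le_one
    (continuous_sum_negMulLog_diracUniformMix (n := n)).continuousOn
    (by rwa [Set.mem_Icc, sum_negMulLog_diracUniformMix_zero, sum_negMulLog_diracUniformMix_one,
      and_iff_right hs])
  exact ⟨n + 1, diracUniformMix n θ, diracUniformMix_nonneg hθ, sum_diracUniformMix, hθs⟩

lemma sum_negMulLog_cons_mul {n : ℕ} (t : ℝ) (q : Fin n → ℝ) (hq : ∑ i, q i = 1) :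
    ∑ i, negMulLog ((Fin.cons t fun i => (1 - t) * q i : Fin (n + 1) → ℝ) i) =
      negMulLog t + negMulLog (1 - t) + (1 - t) * ∑ i, negMulLog (q i) := by
  simp only [Fin.sum_univ_succ, Fin.cons_zero, Fin.cons_succ, negMulLog_mul,
    Finset.sum_add_distrib, ← Finset.sum_mul, ← Finset.mul_sum, hq]
  ring

/-- **Lemma 5.2.** For any real `t, r` with `0 < t < 1` and `H(t, 1-t) < r`, there is a
standard probability space `(L, λ)` with an element `l₁ ∈ L` such that `λ({l₁}) = t` and
`H(L, λ) = r`. -/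
theorem exists_space_with_atom_and_entropy
    (t r : ℝ) (ht0 : 0 < t) (ht1 : t < 1)
    (hr : -(t * Real.log t) - (1 - t) * Real.log (1 - t) < r) :
    ∃ (P : StdProbSpace) (l₁ : P.carrier),
      P.μ {l₁} = ENNReal.ofReal t ∧ shannonEntropy P.μ = ENNReal.ofReal r := by
  have ht : 0 < 1 - t := sub_pos.2 ht1
  set H := negMulLog t + negMulLog (1 - t)
  have hH : H < r := by simp only [H, negMulLog]; linarith
  obtain ⟨n, q, hq0, hq1, hqH⟩ :=
    exists_weights_sum_negMulLog_eq (div_nonneg (sub_nonneg.2 hH.le) ht.le)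
  set w : Fin (n + 1) → ℝ := Fin.cons t fun i => (1 - t) * q i
  have hw0 : ∀ i, 0 ≤ w i := Fin.cases ht0.le fun i => mul_nonneg ht.le (hq0 i)
  have hw1 : ∑ i, w i = 1 := by
    simp [w, Fin.sum_univ_succ, ← Finset.mul_sum, hq1]
  obtain ⟨μ, _, hμw, hμH⟩ := exists_probabilityMeasure_of_weights w hw0 hw1
  refine ⟨⟨Fin (n + 1), μ⟩, 0, hμw 0, ?_⟩
  rw [hμH, sum_negMulLog_cons_mul t q hq1, hqH, mul_div_cancel₀ _ ht.ne', add_sub_cancel]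
end

section
/- Let p ≥ 2 be a prime and let (K, κ) be the two-point probability space K = {k₀, k₁} with κ({k₀}) = ε and κ({k₁}) = 1 − ε, where 0 < ε ≤ 1/2. Then there exist: a standard probability space (L, λ) that is not a two-atom space with H(L, λ) = H(K, κ); a standard probability space (M, μ) with H(M, μ) > 0; and measurable maps α : K^p → M and β : L^p → M such that α_*κ^p = β_*λ^p = μ, α ∘ σ_K = α, and β ∘ σ_L = β, where σ_K is the cyclic shift σ_K(x₀, …, x_{p−1}) = (x₁, …, x_{p−1}, x₀) on K^p, σ_L is the analogous cyclic shift on L^p, and κ^p, λ^p are the p-fold product measures. -/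
open MeasureTheory ENNReal Classical

/-!
The common factor is `Bool`, recording whether a word is constantly `0`. In `K^p` the word
`0 ⋯ 0` has mass `ε^p`. For `L` take a distribution on `ℕ` whose atom `0` has mass
`c = (1 - ε^p)^(1/p)`, so that `0 ⋯ 0` has mass `1 - ε^p` in `L^p`, and let `β` report the
opposite of `α`. Both maps are invariant under every permutation of the coordinates.
Since `p ≥ 2` we get `c > 1 - ε ≥ 1/2`, hence `H(c, 1 - c) < H(ε, 1 - ε)`; spreading the
remaining mass `1 - c` over enough further atoms, the intermediate value theorem raises the
entropy of `L` to exactly `H(ε, 1 - ε)`, and `L` then has at least three atoms.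
-/

open Real

section Entropy

variable {K : Type*} [MeasurableSpace K]

lemma shannonEntropy_eq_tsum [Countable K] (κ : Measure K) [IsProbabilityMeasure κ] :
    shannonEntropy κ = ∑' k, ENNReal.ofReal (negMulLog (κ {k}).toReal) := by
  rw [shannonEntropy, if_pos ⟨Set.univ, Set.countable_univ, measure_univ⟩]
  simp only [negMulLog, neg_mul]

lemma shannonEntropy_pos [Countable K] (κ : Measure K) [IsProbabilityMeasure κ] {k : K}
    (h0 : 0 < (κ {k}).toReal) (h1 : (κ {k}).toReal < 1) : 0 < shannonEntropy κ := by
  rw [shannonEntropy_eq_tsum]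
  refine lt_of_lt_of_le (ENNReal.ofReal_pos.2 ?_) (ENNReal.le_tsum k)
  simpa [negMulLog] using mul_log_neg h0 h1

lemma shannonEntropy_fin_two (κ : Measure (Fin 2)) [IsProbabilityMeasure κ] :
    shannonEntropy κ = ENNReal.ofReal (binEntropy (κ {0}).toReal) := by
  have h1 : (κ {1}).toReal = 1 - (κ {0}).toReal := by
    rw [show ({1} : Set (Fin 2)) = {0}ᶜ by ext i; fin_cases i <;> simp,
      prob_compl_eq_one_sub (measurableSet_singleton 0),
      ENNReal.toReal_sub_of_le prob_le_one ENNReal.one_ne_top, ENNReal.toReal_one]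
  have hle : (κ {0}).toReal ≤ 1 :=
    ENNReal.toReal_le_of_le_ofReal zero_le_one (by simp [prob_le_one])
  rw [shannonEntropy_eq_tsum, tsum_fintype, Fin.sum_univ_two, h1,
    binEntropy_eq_negMulLog_add_negMulLog_one_sub, ENNReal.ofReal_add
      (negMulLog_nonneg ENNReal.toReal_nonneg hle) (negMulLog_nonneg (by linarith) (by simp))]

lemma exists_measure_of_finset [MeasurableSingletonClass K] [Countable K] (q : K → ℝ)
    (s : Finset K) (hq : ∀ k, 0 ≤ q k) (hs : ∀ k ∉ s, q k = 0) (hsum : ∑ k ∈ s, q k = 1) :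
    ∃ μ : Measure K, IsProbabilityMeasure μ ∧ (∀ k, μ {k} = ENNReal.ofReal (q k)) ∧
      shannonEntropy μ = ENNReal.ofReal (∑ k ∈ s, negMulLog (q k)) := by
  have hsum' : ∑ k ∈ s, ENNReal.ofReal (q k) = 1 := by
    rw [← ENNReal.ofReal_sum_of_nonneg fun k _ => hq k, hsum, ENNReal.ofReal_one]
  set μ := (PMF.ofFinset (fun k => ENNReal.ofReal (q k)) s hsum'
    fun k hk => by simp [hs k hk]).toMeasure
  have hμ (k : K) : μ {k} = ENNReal.ofReal (q k) :=
    PMF.toMeasure_apply_singleton _ k (measurableSet_singleton k)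
  have hq1 (k : K) (hk : k ∈ s) : q k ≤ 1 :=
    hsum ▸ Finset.single_le_sum (fun j _ => hq j) hk
  refine ⟨μ, inferInstance, hμ, ?_⟩
  rw [shannonEntropy_eq_tsum, tsum_eq_sum (s := s) fun k hk => by simp [hμ, hs k hk],
    ← ENNReal.ofReal_sum_of_nonneg fun k hk => by
      simpa [hμ, hq k] using negMulLog_nonneg (hq k) (hq1 k hk)]
  simp [hμ, hq]

lemma not_isTwoAtomSpace_of_three_atoms [MeasurableSingletonClass K] (κ : Measure K)
    [IsProbabilityMeasure κ] {a b c : K} (hab : a ≠ b) (hac : a ≠ c) (hbc : b ≠ c)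
    (ha : κ {a} ≠ 0) (hb : κ {b} ≠ 0) (hc : κ {c} ≠ 0) : ¬ IsTwoAtomSpace κ := by
  rintro ⟨k₀, k₁, h⟩
  have hnull : κ {k₀, k₁}ᶜ = 0 :=
    (prob_compl_eq_zero_iff ((measurableSet_singleton k₁).insert k₀)).2 h
  have mem (j : K) (hj : κ {j} ≠ 0) : j = k₀ ∨ j = k₁ := by
    by_contra hjk
    exact hj (measure_mono_null (Set.singleton_subset_iff.2 (by simpa using hjk)) hnull)
  rcases mem a ha with rfl | rfl <;> rcases mem b hb with rfl | rfl <;>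
    rcases mem c hc with rfl | rfl <;> simp_all

end Entropy

lemma MeasureTheory.Measure.ext_of_apply_true (μ ν : Measure Bool) [IsProbabilityMeasure μ]
    [IsProbabilityMeasure ν] (h : μ {true} = ν {true}) : μ = ν := by
  have hfalse : ({false} : Set Bool) = {true}ᶜ := by ext b; simp
  refine Measure.ext_of_singleton fun b => ?_
  cases b
  · rw [hfalse, prob_compl_eq_one_sub (measurableSet_singleton true),
      prob_compl_eq_one_sub (measurableSet_singleton true), h]
  · exact h

lemma map_decide_apply_true {α : Type*} [MeasurableSpace α] (μ : Measure α) {P : α → Prop}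
    [DecidablePred P] (hP : MeasurableSet {x | P x}) :
    μ.map (fun x => decide (P x)) {true} = μ {x | P x} := by
  have hpre : (fun x => decide (P x)) ⁻¹' {true} = {x | P x} := by ext x; simp
  rw [Measure.map_apply (measurable_to_bool (hpre ▸ hP)) (measurableSet_singleton true), hpre]

section Pi

variable {ι γ : Type*} [Fintype ι] [DecidableEq (ι → γ)] [MeasurableSpace γ]
  [MeasurableSingletonClass γ] (ν : Measure γ)

lemma map_decide_eq_apply_true [SigmaFinite ν] (f : ι → γ) :
    (Measure.pi fun _ : ι => ν).map (fun x => decide (x = f)) {true} = ∏ i, ν {f i} := by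
  rw [map_decide_apply_true _ (P := fun x => x = f) (measurableSet_singleton f),
    Set.ofPred_eq_eq_singleton, Measure.pi_singleton]

lemma map_decide_ne_apply_true [IsProbabilityMeasure ν] (f : ι → γ) :
    (Measure.pi fun _ : ι => ν).map (fun x => decide (x ≠ f)) {true} = 1 - ∏ i, ν {f i} := by
  rw [map_decide_apply_true _ (P := fun x => x ≠ f) (measurableSet_singleton f).compl,
    show {x | x ≠ f} = {f}ᶜ from rfl, prob_compl_eq_one_sub (measurableSet_singleton f),
    Measure.pi_singleton]

end Pi

lemma comp_equiv_eq_zero_iff {ι γ : Type*} [Zero γ] (e : ι ≃ ι) (x : ι → γ) :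
    x ∘ e = 0 ↔ x = 0 := by
  simp only [funext_iff, Function.comp_apply, Pi.zero_apply]
  exact (e.surjective.forall (p := fun i => x i = 0)).symm

lemma exists_one_sub_lt_root_one_sub_pow {p : ℕ} (hp : 2 ≤ p) {ε : ℝ} (hε0 : 0 < ε)
    (hε1 : ε < 1) : ∃ c, 1 - ε < c ∧ c < 1 ∧ c ^ p = 1 - ε ^ p := by
  have hsum : (1 - ε) ^ p + ε ^ p < 1 := by
    have h1 := pow_le_pow_of_le_one (sub_nonneg.2 hε1.le) (by linarith) hp
    have h2 := pow_le_pow_of_le_one hε0.le hε1.le hp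
    nlinarith
  have hpos : 0 ≤ 1 - ε ^ p := by nlinarith [pow_nonneg (sub_nonneg.2 hε1.le) p]
  set c := (1 - ε ^ p) ^ (p⁻¹ : ℝ)
  have hcp : c ^ p = 1 - ε ^ p := rpow_inv_natCast_pow hpos (by omega)
  refine ⟨c, lt_of_pow_lt_pow_left₀ p (by positivity) (by linarith), ?_, hcp⟩
  exact rpow_lt_one hpos (by linarith [pow_pos hε0 p]) (by positivity)

lemma binEntropy_lt_of_one_sub_lt {ε c : ℝ} (hε0 : 0 < ε) (hε : ε ≤ 1 / 2)
    (hc : 1 - ε < c) (hc1 : c < 1) : binEntropy c < binEntropy ε := by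
  rw [← binEntropy_one_sub c]
  exact binEntropy_strictMonoOn ⟨by linarith, by linarith⟩ ⟨hε0.le, by linarith⟩ (by linarith)

noncomputable def spreadMass (c s : ℝ) (n i : ℕ) : ℝ :=
  if i = 0 then c else if i ≤ n then (1 - c) * s / n else if i = n + 1 then (1 - c) * (1 - s)
  else 0

lemma sum_range_spreadMass (g : ℝ → ℝ) (c s : ℝ) (n : ℕ) :
    ∑ i ∈ Finset.range (n + 2), g (spreadMass c s n i) =
      g c + n * g ((1 - c) * s / n) + g ((1 - c) * (1 - s)) := by
  have hmid : ∀ i ∈ Finset.range n, g (spreadMass c s n (i + 1)) = g ((1 - c) * s / n) := by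
    intro i hi
    rw [Finset.mem_range] at hi
    simp [spreadMass, Nat.succ_le_of_lt hi]
  rw [Finset.sum_range_succ, Finset.sum_range_succ', Finset.sum_congr rfl hmid]
  simp [spreadMass]
  ring

lemma exists_spreadMass_entropy_eq {c h : ℝ} (hc0 : 0 < c) (hc1 : c < 1)
    (hh : binEntropy c < h) :
    ∃ n s, 2 ≤ n ∧ 0 < s ∧ s ≤ 1 ∧
      ∑ i ∈ Finset.range (n + 2), negMulLog (spreadMass c s n i) = h := by
  obtain ⟨n, hn2, hn⟩ := ((Filter.eventually_ge_atTop 2).and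
    ((tendsto_log_atTop.comp tendsto_natCast_atTop_atTop).eventually_ge_atTop
      (h / (1 - c)))).exists
  set F : ℝ → ℝ := fun s =>
    negMulLog c + n * negMulLog ((1 - c) * s / n) + negMulLog ((1 - c) * (1 - s))
  have hF0 : F 0 = binEntropy c := by
    simp [F, binEntropy_eq_negMulLog_add_negMulLog_one_sub]
  have hF1 : F 1 = binEntropy c + (1 - c) * Real.log n := by
    have hn0 : (n : ℝ) ≠ 0 := by positivity
    simp only [F, binEntropy_eq_negMulLog_add_negMulLog_one_sub, negMulLog, sub_self, mul_zero,
      neg_zero, zero_mul, add_zero, mul_one]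
    rw [log_div (by linarith) hn0]
    field_simp
    ring
  have hF1h : h ≤ F 1 := by
    have := (div_le_iff₀' (by linarith : 0 < 1 - c)).1 (show h / (1 - c) ≤ Real.log n from hn)
    linarith [binEntropy_nonneg hc0.le hc1.le]
  obtain ⟨s, ⟨hs0, hs1⟩, hFs⟩ := intermediate_value_Icc zero_le_one
    (by fun_prop : Continuous F).continuousOn ⟨(hF0.trans_lt hh).le, hF1h⟩
  refine ⟨n, s, hn2, hs0.lt_of_ne ?_, hs1, by rw [sum_range_spreadMass]; exact hFs⟩
  rintro rfl
  exact hh.ne' (hFs.symm.trans hF0)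

lemma exists_measure_nat_not_isTwoAtomSpace {c h : ℝ} (hc0 : 0 < c) (hc1 : c < 1)
    (hh : binEntropy c < h) :
    ∃ μ : Measure ℕ, IsProbabilityMeasure μ ∧ μ {0} = ENNReal.ofReal c ∧
      ¬ IsTwoAtomSpace μ ∧ shannonEntropy μ = ENNReal.ofReal h := by
  obtain ⟨n, s, hn, hs0, hs1, hent⟩ := exists_spreadMass_entropy_eq hc0 hc1 hh
  have hnonneg (i : ℕ) : 0 ≤ spreadMass c s n i := by
    unfold spreadMass
    split_ifs <;> positivity
  have hsupp (i : ℕ) (hi : i ∉ Finset.range (n + 2)) : spreadMass c s n i = 0 := by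
    rw [Finset.mem_range] at hi
    simp [spreadMass, show i ≠ 0 by omega, show ¬ i ≤ n by omega, show i ≠ n + 1 by omega]
  have hsum : ∑ i ∈ Finset.range (n + 2), spreadMass c s n i = 1 := by
    have hn0 : (n : ℝ) ≠ 0 := by positivity
    calc _ = c + n * ((1 - c) * s / n) + (1 - c) * (1 - s) := sum_range_spreadMass id c s n
      _ = 1 := by field_simp; ring
  obtain ⟨μ, hμ, hμsingle, hμent⟩ := exists_measure_of_finset _ _ hnonneg hsupp hsum
  have hpos (i : ℕ) (hi : 1 ≤ i) (hin : i ≤ n) : μ {i} ≠ 0 := by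
    rw [hμsingle, ENNReal.ofReal_ne_zero_iff]
    simp only [spreadMass, show i ≠ 0 by omega, hin, if_false, if_true]
    exact div_pos (mul_pos (by linarith) hs0) (by positivity)
  refine ⟨μ, hμ, by simp [hμsingle, spreadMass], ?_, hμent.trans (congrArg _ hent)⟩
  exact not_isTwoAtomSpace_of_three_atoms μ zero_ne_one (by norm_num) (by norm_num)
    (by simp [hμsingle, spreadMass, hc0]) (hpos 1 le_rfl (by omega)) (hpos 2 (by norm_num) hn)

theorem exists_cyclic_shift_invariant_common_factor_general
    (p : ℕ) (hp : p.Prime) (ε : ℝ) (hε0 : 0 < ε) (hε : ε ≤ 1 / 2)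
    (κ : Measure (Fin 2)) [IsProbabilityMeasure κ]
    (h0 : κ {0} = ENNReal.ofReal ε) :
    ∃ (P Q : StdProbSpace) (α : (Fin p → Fin 2) → Q.carrier)
      (β : (Fin p → P.carrier) → Q.carrier),
      ¬ IsTwoAtomSpace P.μ ∧ shannonEntropy P.μ = shannonEntropy κ ∧
      0 < shannonEntropy Q.μ ∧
      Measurable α ∧ Measurable β ∧
      Measure.map α (Measure.pi fun _ : Fin p => κ) = Q.μ ∧
      Measure.map β (Measure.pi fun _ : Fin p => P.μ) = Q.μ ∧
      (∀ x : Fin p → Fin 2, α (x ∘ finRotate p) = α x) ∧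
      (∀ y : Fin p → P.carrier, β (y ∘ finRotate p) = β y) := by
  obtain ⟨c, hεc, hc1, hcp⟩ := exists_one_sub_lt_root_one_sub_pow hp.two_le hε0 (by linarith)
  obtain ⟨μL, _, hμL0, hμL, hHμL⟩ := exists_measure_nat_not_isTwoAtomSpace (by linarith) hc1
    (binEntropy_lt_of_one_sub_lt hε0 hε hεc hc1)
  have hHκ : shannonEntropy κ = ENNReal.ofReal (binEntropy ε) := by
    rw [shannonEntropy_fin_two, h0, ENNReal.toReal_ofReal hε0.le]
  have hεp : 0 < ε ^ p := pow_pos hε0 p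
  have hεp1 : ε ^ p < 1 := pow_lt_one₀ hε0.le (by linarith) hp.ne_zero
  have hα : (Measure.pi fun _ : Fin p => κ).map (fun x => decide (x = 0)) {true} =
      ENNReal.ofReal (ε ^ p) := by
    simp [map_decide_eq_apply_true, h0, ENNReal.ofReal_pow hε0.le]
  have hβ : (Measure.pi fun _ : Fin p => μL).map (fun y => decide (y ≠ 0)) {true} =
      ENNReal.ofReal (ε ^ p) := by
    simp only [map_decide_ne_apply_true, Pi.zero_apply, hμL0, Finset.prod_const,
      Finset.card_univ, Fintype.card_fin, ← ENNReal.ofReal_pow (by linarith : 0 ≤ c), hcp]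
    rw [← ENNReal.ofReal_one, ← ENNReal.ofReal_sub _ (sub_nonneg.2 hεp1.le),
      _root_.sub_sub_cancel]
  have := Measure.isProbabilityMeasure_map (μ := Measure.pi fun _ : Fin p => κ)
    (measurable_of_countable fun x : Fin p → Fin 2 => decide (x = 0)).aemeasurable
  have := Measure.isProbabilityMeasure_map (μ := Measure.pi fun _ : Fin p => μL)
    (measurable_of_countable fun y : Fin p → ℕ => decide (y ≠ 0)).aemeasurable
  refine ⟨⟨ℕ, μL⟩, ⟨Bool, (Measure.pi fun _ : Fin p => κ).map fun x => decide (x = 0)⟩,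
    fun x => decide (x = 0), fun y => decide (y ≠ 0), hμL, hHμL.trans hHκ.symm, ?_,
    measurable_of_countable _, measurable_of_countable _, rfl,
    Measure.ext_of_apply_true _ _ (hβ.trans hα.symm),
    fun x => by simp only [comp_equiv_eq_zero_iff],
    fun y => by simp only [ne_eq, comp_equiv_eq_zero_iff]⟩
  refine shannonEntropy_pos _ (k := true) ?_ ?_ <;> rw [hα, ENNReal.toReal_ofReal hεp.le]
  exacts [hεp, hεp1]

/-- The claim in the proof of Theorem 1.3: for a prime `p` and a two-point probability space
`(K, κ)` with masses `ε` and `1 - ε` (`0 < ε ≤ 1/2`), there exist a standard probability space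
`(L, λ)` which is not a two-atom space with `H(L, λ) = H(K, κ)`, a nontrivial standard
probability space `(M, μ)`, and measurable factor maps `α : K^p → M`, `β : L^p → M` with
`α_* κ^p = β_* λ^p = μ` which are invariant under the cyclic shifts `σ_K`, `σ_L`. -/
theorem exists_cyclic_shift_invariant_common_factor
    (p : ℕ) (hp : p.Prime) (ε : ℝ) (hε0 : 0 < ε) (hε : ε ≤ 1 / 2)
    (κ : Measure (Fin 2)) [IsProbabilityMeasure κ]
    (h0 : κ {0} = ENNReal.ofReal ε) (h1 : κ {1} = ENNReal.ofReal (1 - ε)) :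
    ∃ (P Q : StdProbSpace) (α : (Fin p → Fin 2) → Q.carrier)
      (β : (Fin p → P.carrier) → Q.carrier),
      ¬ IsTwoAtomSpace P.μ ∧ shannonEntropy P.μ = shannonEntropy κ ∧
      0 < shannonEntropy Q.μ ∧
      Measurable α ∧ Measurable β ∧
      Measure.map α (Measure.pi fun _ : Fin p => κ) = Q.μ ∧
      Measure.map β (Measure.pi fun _ : Fin p => P.μ) = Q.μ ∧
      (∀ x : Fin p → Fin 2, α (x ∘ finRotate p) = α x) ∧
      (∀ y : Fin p → P.carrier, β (y ∘ finRotate p) = β y) :=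
  exists_cyclic_shift_invariant_common_factor_general p hp ε hε0 hε κ h0
end
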